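/- arXiv:1911.08310 — 5 statements merged into one kernel-verified Lean document; each statement's English description precedes it below -/
import Mathlib

section
/- For all real x ≥ 0, natural number j, and complex s with Re(s) > 0 and x·|s| ≥ 2, the integral ∫_x^∞ u^j e^{-us} du satisfies the bound |∫_x^∞ u^j e^{-us} du| ≤ C · j! · e^{-Re(s)·x} · x^j / |s| for some absolute constant C. -/
/-!
Integrating by parts, `I_j(x) = ∫_x^∞ u^j e^{-us} du` satisfies
`I_j(x) = x^j e^{-xs}/s + (j/s) I_{j-1}(x)`. Taking norms, the boundary term is
`x^j e^{-x Re s}/|s|`, and since `x|s| ≥ 2` the second term is at most the bound for `j`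
obtained from the bound for `j - 1`; induction on `j` then gives the estimate with `C = 2`.
-/

open Real Complex MeasureTheory Set Filter Asymptotics Topology

section PowMulExp

variable (j : ℕ) (s : ℂ)

lemma norm_ofReal_pow_mul_cexp_neg_mul {u : ℝ} (hu : 0 ≤ u) :
    ‖(u : ℂ) ^ j * Complex.exp (-u * s)‖ = u ^ j * Real.exp (-s.re * u) := by
  rw [norm_mul, norm_pow, Complex.norm_exp, Complex.norm_of_nonneg hu]
  simp [mul_comm]

lemma tendsto_pow_mul_exp_neg_mul_atTop {b : ℝ} (hb : 0 < b) :
    Tendsto (fun u : ℝ => u ^ j * Real.exp (-b * u)) atTop (𝓝 0) := by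
  refine (tendsto_rpow_mul_exp_neg_mul_atTop_nhds_zero j b hb).congr fun u => ?_
  rw [Real.rpow_natCast, neg_mul]

lemma integrableOn_Ioi_ofReal_pow_mul_cexp_neg_mul {x : ℝ} (hx : 0 ≤ x) (hs : 0 < s.re) :
    IntegrableOn (fun u : ℝ => (u : ℂ) ^ j * Complex.exp (-u * s)) (Ioi x) := by
  have hdecay : (fun u : ℝ => u ^ j * Real.exp (-s.re * u)) =O[atTop]
      fun u => Real.exp (-(s.re / 2) * u) := by
    refine (isLittleO_of_tendsto (fun u h => absurd h (Real.exp_ne_zero _)) ?_).isBigO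
    refine (tendsto_pow_mul_exp_neg_mul_atTop j (half_pos hs)).congr fun u => ?_
    rw [eq_div_iff (Real.exp_ne_zero _), mul_assoc, ← Real.exp_add]
    ring_nf
  have hreal := integrable_of_isBigO_exp_neg (a := x) (half_pos hs) (by fun_prop) hdecay
  rw [IntegrableOn, ← integrable_norm_iff (by fun_prop)]
  refine hreal.congr_fun (fun u hu => ?_) measurableSet_Ioi
  exact (norm_ofReal_pow_mul_cexp_neg_mul j s (hx.trans (le_of_lt hu))).symm

lemma tendsto_ofReal_pow_mul_cexp_neg_mul_atTop (hs : 0 < s.re) :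
    Tendsto (fun u : ℝ => (u : ℂ) ^ j * Complex.exp (-u * s)) atTop (𝓝 0) := by
  rw [tendsto_zero_iff_norm_tendsto_zero]
  refine (tendsto_pow_mul_exp_neg_mul_atTop j hs).congr' ?_
  filter_upwards [eventually_ge_atTop 0] with u hu
  exact (norm_ofReal_pow_mul_cexp_neg_mul j s hu).symm

lemma hasDerivAt_pow_mul_cexp_neg_mul_div (hs : s ≠ 0) (z : ℂ) :
    HasDerivAt (fun z : ℂ => -(z ^ j * Complex.exp (-z * s)) / s)
      (z ^ j * Complex.exp (-z * s) - j / s * (z ^ (j - 1) * Complex.exp (-z * s))) z := by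
  have hexp : HasDerivAt (fun z : ℂ => Complex.exp (-z * s)) (-s * Complex.exp (-z * s)) z := by
    simpa [mul_comm] using ((hasDerivAt_id z).neg.mul_const s).cexp
  refine (((hasDerivAt_pow j z).mul hexp).neg.div_const s).congr_deriv ?_
  linear_combination (z ^ j * Complex.exp (-z * s)) * mul_inv_cancel₀ hs

lemma integral_Ioi_ofReal_pow_mul_cexp_neg_mul {x : ℝ} (hx : 0 ≤ x) (hs : 0 < s.re) :
    ∫ u in Ioi x, (u : ℂ) ^ j * Complex.exp (-u * s) =
      (x : ℂ) ^ j * Complex.exp (-x * s) / s +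
        j / s * ∫ u in Ioi x, (u : ℂ) ^ (j - 1) * Complex.exp (-u * s) := by
  have hs0 : s ≠ 0 := fun h => by simp [h] at hs
  have hint := integrableOn_Ioi_ofReal_pow_mul_cexp_neg_mul j s hx hs
  have hint' := (integrableOn_Ioi_ofReal_pow_mul_cexp_neg_mul (j - 1) s hx hs).const_mul (j / s)
  have hparts := integral_Ioi_of_hasDerivAt_of_tendsto'
    (fun u _ => (hasDerivAt_pow_mul_cexp_neg_mul_div j s hs0 u).comp_ofReal) (hint.sub hint')
    (by simpa using (tendsto_ofReal_pow_mul_cexp_neg_mul_atTop j s hs).neg.div_const s)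
  rw [integral_sub hint hint', integral_const_mul, sub_eq_iff_eq_add] at hparts
  rw [hparts]
  ring

end PowMulExp

lemma le_two_mul_factorial_mul_pow_div {b : ℕ → ℝ} {x a E : ℝ} (ha : 0 < a) (hE : 0 ≤ E)
    (hx : 0 ≤ x) (hxa : 2 ≤ x * a) (hb : ∀ j, b j ≤ x ^ j * E / a + j / a * b (j - 1)) (j : ℕ) :
    b j ≤ 2 * j.factorial * E * x ^ j / a := by
  induction j with
  | zero =>
    calc b 0 ≤ E / a := by simpa using hb 0
      _ ≤ 2 * (0 : ℕ).factorial * E * x ^ 0 / a := by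
        simp only [Nat.factorial_zero, Nat.cast_one, mul_one, pow_zero]; gcongr; linarith
  | succ n ih =>
    have hstep : (n + 1 : ℝ) / a * b n ≤ (n + 1).factorial * E * x ^ (n + 1) / a :=
      calc (n + 1 : ℝ) / a * b n
          ≤ (n + 1) / a * (2 * n.factorial * E * x ^ n / a) := by gcongr
        _ = (n + 1).factorial * E * x ^ n * (2 / a) / a := by
          rw [Nat.factorial_succ]; push_cast; ring
        _ ≤ (n + 1).factorial * E * x ^ n * x / a := by
          gcongr; rwa [div_le_iff₀ ha]
        _ = (n + 1).factorial * E * x ^ (n + 1) / a := by ring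
    have hboundary : x ^ (n + 1) * E / a ≤ (n + 1).factorial * E * x ^ (n + 1) / a := by
      have hfact : (1 : ℝ) ≤ (n + 1).factorial := by exact_mod_cast (n + 1).factorial_pos
      calc x ^ (n + 1) * E / a = 1 * (E * x ^ (n + 1)) / a := by ring
        _ ≤ (n + 1).factorial * (E * x ^ (n + 1)) / a := by gcongr
        _ = (n + 1).factorial * E * x ^ (n + 1) / a := by ring
    calc b (n + 1) ≤ x ^ (n + 1) * E / a + (n + 1 : ℝ) / a * b n := by simpa using hb (n + 1)
      _ ≤ (n + 1).factorial * E * x ^ (n + 1) / a + (n + 1).factorial * E * x ^ (n + 1) / a :=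
        add_le_add hboundary hstep
      _ = 2 * (n + 1).factorial * E * x ^ (n + 1) / a := by ring

/-- For all real `x ≥ 0`, `j : ℕ` and complex `s` with `Re s > 0` and
`x * |s| ≥ 2`, one has `|∫_x^∞ u^j e^{-us} du| ≤ C · j! · e^{-Re(s)x} · x^j / |s|`
for an absolute constant `C`. -/
theorem stmt0 :
    ∃ C : ℝ, 0 < C ∧ ∀ (x : ℝ) (j : ℕ) (s : ℂ), 0 ≤ x → 0 < s.re →
      2 ≤ x * ‖s‖ →
      ‖∫ u in Set.Ioi x, (u : ℂ) ^ j * Complex.exp (-u * s)‖ ≤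
        C * (Nat.factorial j) * Real.exp (-s.re * x) * x ^ j / ‖s‖ := by
  refine ⟨2, two_pos, fun x j s hx hs hxs => ?_⟩
  have hs0 : 0 < ‖s‖ := norm_pos_iff.mpr fun h => by simp [h] at hs
  refine le_two_mul_factorial_mul_pow_div
    (b := fun k => ‖∫ u in Ioi x, (u : ℂ) ^ k * Complex.exp (-u * s)‖)
    hs0 (Real.exp_pos _).le hx hxs (fun k => ?_) j
  rw [integral_Ioi_ofReal_pow_mul_cexp_neg_mul k s hx hs]
  refine (norm_add_le _ _).trans_eq ?_
  rw [norm_div, norm_ofReal_pow_mul_cexp_neg_mul k s hx, norm_mul, norm_div,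
    Complex.norm_natCast]
end

section
/- The Dirichlet series Z(s) := Σ_{c=1}^∞ μ²(c) / (c^s · φ(c)) admits, for Re(s) > 0, the Euler product factorization Z(s) = ζ(s+1) · ∏_p ( 1 + (1/(p−1)) · ( p^{-(s+1)} − p^{-(2s+1)} ) ). -/
open Real Complex
open scoped Classical

/-!
The summand `f` is multiplicative and vanishes off the squarefree numbers, so its Euler factor
at `p` is `1 + f p = 1 + 1 / (p ^ s (p - 1))`. It is absolutely summable for `Re s > 0` because
`‖f n‖ ≤ ∏_{p ∣ n} 2 p ^ (-1 - Re s)`, a summable function of the finite set of prime factors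
of `n`. Dividing its Euler product by that of `ζ (s + 1)`, i.e. multiplying each factor by
`1 - p ^ (-(s + 1))`, gives the stated factors.
-/

theorem tsum_prime_pow_eq_one_add_of_squarefree_support {R : Type*} [AddCommMonoid R]
    [TopologicalSpace R] [One R] {f : ℕ → R} (hf₁ : f 1 = 1)
    (hsupp : ∀ n, ¬ Squarefree n → f n = 0) {p : ℕ} (hp : p.Prime) :
    ∑' e : ℕ, f (p ^ e) = 1 + f p := by
  have hvanish : ∀ e ∉ ({0, 1} : Finset ℕ), f (p ^ e) = 0 := fun e he ↦ by
    simp only [Finset.mem_insert, Finset.mem_singleton, not_or] at he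
    exact hsupp _ fun h ↦ he.2 ((Nat.squarefree_pow_iff hp.ne_one he.1).mp h).2
  rw [tsum_eq_sum hvanish, Finset.sum_pair zero_ne_one, pow_zero, pow_one, hf₁]

theorem ArithmeticFunction.IsMultiplicative.summable_norm_of_squarefree_support {R : Type*}
    [NormedField R] {f : ArithmeticFunction R} (hf : f.IsMultiplicative)
    (hsupp : ∀ n, ¬ Squarefree n → f n = 0) {b : ℕ → ℝ} (hb₀ : ∀ n, 0 ≤ b n) (hb : Summable b)
    (hfb : ∀ p, p.Prime → ‖f p‖ ≤ b p) :
    Summable (‖f ·‖) := by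
  have hinj : Function.Injective fun n : {n : ℕ // Squarefree n} ↦ n.1.primeFactors :=
    fun m n h ↦ Subtype.ext <| by
      rw [← Nat.prod_primeFactors_of_squarefree m.2, ← Nat.prod_primeFactors_of_squarefree n.2]
      exact congrArg (∏ p ∈ ·, p) h
  have hB : Summable ({n : ℕ | Squarefree n}.indicator fun n ↦ ∏ p ∈ n.primeFactors, b p) :=
    (summable_subtype_iff_indicator (s := {n : ℕ | Squarefree n})).mp <|
      (summable_finsetProd_of_summable_nonneg hb₀ hb).comp_injective hinj
  refine hB.of_nonneg_of_le (fun _ ↦ norm_nonneg _) fun n ↦ ?_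
  by_cases hn : Squarefree n
  · rw [Set.indicator_of_mem hn, ← hf.prod_primeFactors hn, norm_prod]
    exact Finset.prod_le_prod (fun _ _ ↦ norm_nonneg _)
      fun p hp ↦ hfb p (Nat.prime_of_mem_primeFactors hp)
  · rw [Set.indicator_of_notMem hn, hsupp n hn, norm_zero]

theorem one_add_mul_one_sub_cpow {x : ℂ} (hx₀ : x ≠ 0) (hx₁ : x ≠ 1) (s : ℂ) :
    (1 + (x ^ s)⁻¹ * (x - 1)⁻¹) * (1 - x ^ (-(s + 1))) =
      1 + (1 / (x - 1)) * (x ^ (-(s + 1)) - x ^ (-(2 * s + 1))) := by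
  have hx₁' : x - 1 ≠ 0 := sub_ne_zero.mpr hx₁
  have hxs : x ^ s ≠ 0 := by simp [cpow_eq_zero_iff, hx₀]
  rw [show -(s + 1) = -s + -1 by ring, show -(2 * s + 1) = -s + (-s + -1) by ring,
    cpow_add _ _ hx₀, cpow_add _ _ hx₀, cpow_add _ _ hx₀, cpow_neg, cpow_neg_one]
  field_simp
  ring

open ArithmeticFunction

noncomputable def squarefreeTotientTerm (s : ℂ) : ArithmeticFunction ℂ :=
  ⟨fun c ↦ (if Squarefree c then (1 : ℂ) else 0) / ((c : ℂ) ^ s * (Nat.totient c : ℂ)), by simp⟩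

section squarefreeTotientTerm

variable (s : ℂ)

theorem squarefreeTotientTerm_apply (c : ℕ) : squarefreeTotientTerm s c =
    (if Squarefree c then (1 : ℂ) else 0) / ((c : ℂ) ^ s * (Nat.totient c : ℂ)) := rfl

theorem squarefreeTotientTerm_of_not_squarefree {n : ℕ} (hn : ¬ Squarefree n) :
    squarefreeTotientTerm s n = 0 := by
  simp [squarefreeTotientTerm_apply, hn]

theorem isMultiplicative_squarefreeTotientTerm : (squarefreeTotientTerm s).IsMultiplicative := by
  refine ⟨by simp [squarefreeTotientTerm_apply], fun {m n} hmn ↦ ?_⟩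
  by_cases hsq : Squarefree (m * n)
  · obtain ⟨hm, hn⟩ := (Nat.squarefree_mul hmn).mp hsq
    simp only [squarefreeTotientTerm_apply, if_pos hsq, if_pos hm, if_pos hn,
      Nat.totient_mul hmn, Nat.cast_mul, natCast_mul_natCast_cpow]
    ring
  · rw [squarefreeTotientTerm_of_not_squarefree s hsq]
    rcases not_and_or.mp ((Nat.squarefree_mul hmn).not.mp hsq) with h | h <;>
      simp [squarefreeTotientTerm_of_not_squarefree s h]

theorem squarefreeTotientTerm_prime {p : ℕ} (hp : p.Prime) :
    squarefreeTotientTerm s p = ((p : ℂ) ^ s)⁻¹ * ((p : ℂ) - 1)⁻¹ := by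
  rw [squarefreeTotientTerm_apply, if_pos hp.squarefree, Nat.totient_prime hp,
    Nat.cast_sub hp.one_le, one_div, mul_inv, Nat.cast_one]

theorem norm_squarefreeTotientTerm_prime_le {p : ℕ} (hp : p.Prime) :
    ‖squarefreeTotientTerm s p‖ ≤ 2 * ((p : ℝ) ^ (1 + s.re))⁻¹ := by
  have hp₀ : (0 : ℝ) < p := Nat.cast_pos.mpr hp.pos
  have hp₂ : (2 : ℝ) ≤ p := by exact_mod_cast hp.two_le
  have hpow : 0 < (p : ℝ) ^ s.re := rpow_pos_of_pos hp₀ _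
  have hnorm : ‖(p : ℂ) - 1‖ = (p : ℝ) - 1 := by
    rw [← Nat.cast_one, ← Nat.cast_sub hp.one_le, Complex.norm_natCast, Nat.cast_sub hp.one_le,
      Nat.cast_one]
  rw [squarefreeTotientTerm_prime s hp, norm_mul, norm_inv, norm_inv,
    norm_natCast_cpow_of_pos hp.pos, hnorm, rpow_add hp₀, rpow_one, ← mul_inv,
    ← inv_inv (2 : ℝ), ← mul_inv]
  refine inv_anti₀ (by positivity) ?_
  nlinarith

theorem summable_norm_squarefreeTotientTerm (hs : 0 < s.re) :
    Summable (‖squarefreeTotientTerm s ·‖) :=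
  (isMultiplicative_squarefreeTotientTerm s).summable_norm_of_squarefree_support
    (fun _ ↦ squarefreeTotientTerm_of_not_squarefree s) (fun _ ↦ by positivity)
    ((Real.summable_nat_rpow_inv.mpr (by linarith)).mul_left 2)
    (fun _ ↦ norm_squarefreeTotientTerm_prime_le s)

end squarefreeTotientTerm

/-- for `Re s > 0`, the Dirichlet series `Z(s) = Σ_c μ²(c)/(c^s φ(c))`
has the Euler product `Z(s) = ζ(s+1) ∏_p (1 + (1/(p-1))(p^{-(s+1)} - p^{-(2s+1)}))`. -/
theorem stmt7 (s : ℂ) (hs : 0 < s.re) :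
    (∑' c : ℕ, (if Squarefree c then (1 : ℂ) else 0) / ((c : ℂ) ^ s * (Nat.totient c : ℂ))) =
      riemannZeta (s + 1) *
        ∏' p : Nat.Primes,
          (1 + (1 / ((p : ℕ) - 1 : ℂ)) *
            (((p : ℕ) : ℂ) ^ (-(s + 1)) - ((p : ℕ) : ℂ) ^ (-(2 * s + 1)))) := by
  change ∑' c, squarefreeTotientTerm s c = _
  have hs₁ : 1 < (s + 1).re := by simp [hs]
  have hζ₀ : riemannZeta (s + 1) ≠ 0 := riemannZeta_ne_zero_of_one_lt_re hs₁
  have hf := isMultiplicative_squarefreeTotientTerm s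
  have hZ : HasProd (fun p : Nat.Primes ↦ ∑' e : ℕ, squarefreeTotientTerm s ((p : ℕ) ^ e))
      (∑' n, squarefreeTotientTerm s n) :=
    EulerProduct.eulerProduct_hasProd hf.map_one hf.map_mul_of_coprime
      (summable_norm_squarefreeTotientTerm s hs) (squarefreeTotientTerm s).map_zero
  have hfactor (p : Nat.Primes) :
      1 + (1 / ((p : ℕ) - 1 : ℂ)) * (((p : ℕ) : ℂ) ^ (-(s + 1)) - ((p : ℕ) : ℂ) ^ (-(2 * s + 1))) =
        (∑' e : ℕ, squarefreeTotientTerm s ((p : ℕ) ^ e)) / (1 - ((p : ℕ) : ℂ) ^ (-(s + 1)))⁻¹ := by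
    rw [tsum_prime_pow_eq_one_add_of_squarefree_support hf.map_one
      (fun _ ↦ squarefreeTotientTerm_of_not_squarefree s) p.prop,
      squarefreeTotientTerm_prime s p.prop, div_inv_eq_mul]
    exact (one_add_mul_one_sub_cpow (Nat.cast_ne_zero.mpr p.prop.ne_zero)
      (Nat.cast_ne_one.mpr p.prop.ne_one) s).symm
  have hprod := (hZ.div₀ (riemannZeta_eulerProduct_hasProd hs₁) hζ₀).congr_fun hfactor
  rw [hprod.tprod_eq, mul_div_cancel₀ _ hζ₀]
end

section
/- Assume the prime number theorem in the form θ(t) − t ≪ t·exp(−2c√(log t)) for some c > 0, where θ(t) = Σ_{p ≤ t} log p. Let g: ℝ → ℂ be smooth with g and g' bounded. Then for X ≥ 2 and any 0 < ξ < 1, |∫_{X^{ξ/2}}^∞ ( (2/log X)·g'(2 log t / log X) − g(2 log t / log X) ) · (θ(t) − t)/t² dt| ≪ exp(−c·√(ξ·log X)). -/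
open Real Complex MeasureTheory

/-- The Chebyshev function `θ(t) = Σ_{p ≤ t} log p`. -/
noncomputable def chebTheta (t : ℝ) : ℝ :=
  ∑ p ∈ Finset.filter Nat.Prime (Finset.Icc 1 ⌊t⌋₊), Real.log p

open Filter Set Topology in
lemma stmt12_sqrt_tendsto_atTop : Tendsto Real.sqrt atTop atTop := by
  apply Filter.tendsto_atTop_atTop.mpr
  intro b
  refine ⟨b ^ 2, fun x hx => ?_⟩
  calc b ≤ |b| := le_abs_self b
    _ = Real.sqrt (b ^ 2) := (Real.sqrt_sq_eq_abs b).symm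
    _ ≤ Real.sqrt x := Real.sqrt_le_sqrt hx

open Filter Set Topology in
lemma stmt12_tail_int (c : ℝ) (hc : 0 < c) {a : ℝ} (ha : 1 < a) :
    IntegrableOn (fun t => Real.exp (-2*c*Real.sqrt (Real.log t)) / t) (Set.Ioi a) ∧
    ∫ t in Set.Ioi a, Real.exp (-2*c*Real.sqrt (Real.log t)) / t
      = (Real.sqrt (Real.log a)/c + 1/(2*c^2)) * Real.exp (-2*c*Real.sqrt (Real.log a)) := by
  set F : ℝ → ℝ := fun t => -(Real.sqrt (Real.log t)/c + 1/(2*c^2)) * Real.exp (-2*c*Real.sqrt (Real.log t)) with hF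
  have hv : ∀ t : ℝ, 1 < t →
      HasDerivAt (fun x => Real.sqrt (Real.log x)) (1/(2*Real.sqrt (Real.log t)) * t⁻¹) t := by
    intro t ht
    have hl : 0 < Real.log t := Real.log_pos ht
    exact (Real.hasDerivAt_sqrt hl.ne').comp t (Real.hasDerivAt_log (by linarith))
  have hderiv : ∀ t ∈ Set.Ioi a, HasDerivAt F (Real.exp (-2*c*Real.sqrt (Real.log t)) / t) t := by
    intro t ht
    have ht1 : 1 < t := lt_trans ha ht
    have hl : 0 < Real.log t := Real.log_pos ht1
    have hs : 0 < Real.sqrt (Real.log t) := Real.sqrt_pos.2 hl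
    have h1 := hv t ht1
    have h2 : HasDerivAt (fun x => -(Real.sqrt (Real.log x)/c + 1/(2*c^2)))
        (-(1/(2*Real.sqrt (Real.log t)) * t⁻¹ / c)) t := ((h1.div_const c).add_const _).neg
    have h3 := ((h1.const_mul (-2*c)).exp)
    have h4 := h2.mul h3
    refine h4.congr_deriv ?_
    have ht0 : t ≠ 0 := by linarith
    field_simp
    ring
  have hcont : ContinuousWithinAt F (Set.Ici a) a := by
    have hsl : ContinuousAt (fun x => Real.sqrt (Real.log x)) a :=
      Real.continuous_sqrt.continuousAt.comp (Real.continuousAt_log (by linarith))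
    have : ContinuousAt F a :=
      (((hsl.div_const c).add continuousAt_const).neg).mul
        (Real.continuous_exp.continuousAt.comp (hsl.const_mul (-2*c)))
    exact this.continuousWithinAt
  have htend : Tendsto F atTop (𝓝 0) := by
    have hvTop : Tendsto (fun t => Real.sqrt (Real.log t)) atTop atTop :=
      stmt12_sqrt_tendsto_atTop.comp Real.tendsto_log_atTop
    have h2c : Tendsto (fun s : ℝ => 2*c*s) atTop atTop :=
      Tendsto.const_mul_atTop (by positivity) tendsto_id
    have h0 : Tendsto (fun x : ℝ => x * Real.exp (-x)) atTop (𝓝 0) := by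
      simpa using Real.tendsto_pow_mul_exp_neg_atTop_nhds_zero 1
    have e1 : Tendsto (fun s : ℝ => s * Real.exp (-2*c*s)) atTop (𝓝 0) := by
      have h := (h0.comp h2c).const_mul (1/(2*c))
      rw [mul_zero] at h
      apply h.congr
      intro s
      simp only [Function.comp]
      field_simp
    have e2 : Tendsto (fun s : ℝ => Real.exp (-2*c*s)) atTop (𝓝 0) := by
      have h := Real.tendsto_exp_neg_atTop_nhds_zero.comp h2c
      apply h.congr
      intro s
      simp only [Function.comp]
      ring_nf
    have hψ : Tendsto (fun s : ℝ => -(s/c + 1/(2*c^2)) * Real.exp (-2*c*s)) atTop (𝓝 0) := by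
      have h := ((e1.const_mul (1/c)).add (e2.const_mul (1/(2*c^2)))).neg
      simp only [mul_zero, add_zero, neg_zero, zero_add] at h
      apply h.congr
      intro s
      ring
    exact hψ.comp hvTop
  have hpos : ∀ t ∈ Set.Ioi a, 0 ≤ Real.exp (-2*c*Real.sqrt (Real.log t)) / t := by
    intro t ht
    have : (0:ℝ) < t := lt_trans (by linarith) ht
    positivity
  constructor
  · exact integrableOn_Ioi_deriv_of_nonneg hcont hderiv hpos htend
  · rw [integral_Ioi_of_hasDerivAt_of_nonneg hcont hderiv hpos htend, hF]
    ring

/-- assuming `θ(t) - t ≪ t exp(-2c√(log t))` and given a smooth `g`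
with `g, g'` bounded, the tail
`∫_{X^{ξ/2}}^∞ ((2/log X) g'(2 log t/log X) - g(2 log t/log X)) (θ(t)-t)/t² dt`
is `≪ exp(-c √(ξ log X))` for `X ≥ 2` and `0 < ξ < 1`. -/
theorem stmt12 (c C₀ : ℝ) (hc : 0 < c) (hC₀ : 0 < C₀)
    (hPNT : ∀ t : ℝ, 2 ≤ t →
      |chebTheta t - t| ≤ C₀ * t * Real.exp (-2 * c * Real.sqrt (Real.log t)))
    (g : ℝ → ℂ) (hg : ContDiff ℝ (⊤ : ℕ∞) g) (Mg Mg' : ℝ)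
    (hgb : ∀ u : ℝ, ‖g u‖ ≤ Mg) (hgb' : ∀ u : ℝ, ‖deriv g u‖ ≤ Mg') :
    ∃ C : ℝ, 0 < C ∧ ∀ X ξ : ℝ, 2 ≤ X → 0 < ξ → ξ < 1 →
      ‖∫ t in Set.Ioi (X ^ (ξ / 2)),
          ((2 / Real.log X) * deriv g (2 * Real.log t / Real.log X) -
            g (2 * Real.log t / Real.log X)) * ((chebTheta t - t) / t ^ 2 : ℝ)‖
        ≤ C * Real.exp (-c * Real.sqrt (ξ * Real.log X)) := by
  have hMg : 0 ≤ Mg := le_trans (norm_nonneg _) (hgb 0)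
  have hMg' : 0 ≤ Mg' := le_trans (norm_nonneg _) (hgb' 0)
  have hlog2 : 0 < Real.log 2 := Real.log_pos (by norm_num)
  have hsqrt2 : Real.sqrt 2 < 2 := by
    nlinarith [Real.sq_sqrt (by norm_num : (0:ℝ) ≤ 2), Real.sqrt_nonneg 2]
  set δ : ℝ := (2 - Real.sqrt 2) * c with hδdef
  have hδ : 0 < δ := by
    have : 0 < 2 - Real.sqrt 2 := by linarith
    positivity
  set K : ℝ := 1/(c*δ) + 1/(2*c^2) with hKdef
  set A : ℝ := (2/Real.log 2) * Mg' + Mg with hAdef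
  have hA0 : 0 ≤ A := by
    have : 0 ≤ (2/Real.log 2) * Mg' := by positivity
    simp only [hAdef]; linarith
  set C₁ : ℝ := C₀ + Real.exp (2*c*Real.sqrt (Real.log 2)) with hC₁def
  have hC₁0 : 0 < C₁ := by positivity
  have hK0 : 0 < K := by positivity
  refine ⟨A * C₁ * K + 1, by positivity, ?_⟩
  intro X ξ hX2 hξ0 hξ1
  have hX1 : (1:ℝ) < X := by linarith
  have hX0 : (0:ℝ) < X := by linarith
  have hlogX : 0 < Real.log X := Real.log_pos hX1
  have hlog2X : Real.log 2 ≤ Real.log X := Real.log_le_log (by norm_num) hX2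
  set a : ℝ := X ^ (ξ/2) with hadef
  have ha1 : 1 < a := by
    rw [hadef]
    exact (Real.one_lt_rpow_iff_of_pos hX0).mpr (Or.inl ⟨hX1, by linarith⟩)
  have hloga : Real.log a = ξ/2 * Real.log X := by
    rw [hadef, Real.log_rpow hX0]
  -- pointwise bound on the integrand
  have hbound : ∀ t ∈ Set.Ioi a,
      ‖((2 / Real.log X) * deriv g (2 * Real.log t / Real.log X) -
          g (2 * Real.log t / Real.log X)) * ((chebTheta t - t) / t ^ 2 : ℝ)‖
        ≤ (A * C₁) * (Real.exp (-2*c*Real.sqrt (Real.log t)) / t) := by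
    intro t ht
    have ht1 : 1 < t := lt_trans ha1 ht
    have ht0 : (0:ℝ) < t := by linarith
    set u : ℝ := 2 * Real.log t / Real.log X
    have hcoef : ‖(2 / (Real.log X : ℂ)) * deriv g u - g u‖ ≤ A := by
      have h1 : ‖(2 / (Real.log X : ℂ))‖ = 2 / Real.log X := by
        rw [norm_div, Complex.norm_real, Real.norm_eq_abs, _root_.abs_of_nonneg hlogX.le]
        norm_num
      have h2 : 2 / Real.log X ≤ 2 / Real.log 2 := by gcongr
      calc ‖(2 / (Real.log X : ℂ)) * deriv g u - g u‖
          ≤ ‖(2 / (Real.log X : ℂ)) * deriv g u‖ + ‖g u‖ := norm_sub_le _ _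
        _ = (2 / Real.log X) * ‖deriv g u‖ + ‖g u‖ := by rw [norm_mul, h1]
        _ ≤ (2 / Real.log 2) * Mg' + Mg := by
            refine add_le_add ?_ (hgb u)
            exact mul_le_mul h2 (hgb' u) (norm_nonneg _) (by positivity)
        _ = A := hAdef.symm
    have hrb : |(chebTheta t - t) / t ^ 2| ≤ C₁ * (Real.exp (-2*c*Real.sqrt (Real.log t)) / t) := by
      rw [abs_div, abs_of_pos (by positivity : (0:ℝ) < t^2)]
      rcases le_or_gt 2 t with h2t | h2t
      · have hP := hPNT t h2t
        calc |chebTheta t - t| / t ^ 2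
            ≤ (C₀ * t * Real.exp (-2 * c * Real.sqrt (Real.log t))) / t ^ 2 := by gcongr
          _ = C₀ * (Real.exp (-2*c*Real.sqrt (Real.log t)) / t) := by
              field_simp
          _ ≤ C₁ * (Real.exp (-2*c*Real.sqrt (Real.log t)) / t) := by
              have : C₀ ≤ C₁ := by
                simp only [hC₁def]
                have := Real.exp_pos (2*c*Real.sqrt (Real.log 2))
                linarith
              gcongr
      · have hfl : ⌊t⌋₊ = 1 := by
          rw [Nat.floor_eq_iff (by linarith)]
          constructor <;> [norm_num; (push_cast; linarith)] <;> linarith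
        have hθ : chebTheta t = 0 := by
          simp [chebTheta, hfl, Finset.Icc_self, Finset.filter_singleton, Nat.not_prime_one]
        rw [hθ, zero_sub, abs_neg, abs_of_pos ht0]
        have he : Real.exp (2*c*Real.sqrt (Real.log t)) ≤ C₁ := by
          have hlt : Real.log t ≤ Real.log 2 := Real.log_le_log ht0 h2t.le
          have hst : Real.sqrt (Real.log t) ≤ Real.sqrt (Real.log 2) := Real.sqrt_le_sqrt hlt
          have : Real.exp (2*c*Real.sqrt (Real.log t)) ≤ Real.exp (2*c*Real.sqrt (Real.log 2)) := by
            apply Real.exp_le_exp.2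
            have : 0 ≤ 2*c := by linarith
            exact mul_le_mul_of_nonneg_left hst this
          simp only [hC₁def]
          linarith
        calc t / t ^ 2 = 1 / t := by
              rw [sq]; field_simp
          _ = Real.exp (2*c*Real.sqrt (Real.log t)) * (Real.exp (-2*c*Real.sqrt (Real.log t)) / t) := by
              rw [mul_div_assoc', ← Real.exp_add]
              norm_num
          _ ≤ C₁ * (Real.exp (-2*c*Real.sqrt (Real.log t)) / t) := by
              have : (0:ℝ) ≤ Real.exp (-2*c*Real.sqrt (Real.log t)) / t := by positivity
              exact mul_le_mul_of_nonneg_right he this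
    calc ‖((2 / (Real.log X : ℂ)) * deriv g u - g u) * (((chebTheta t - t) / t ^ 2 : ℝ) : ℂ)‖
        = ‖(2 / (Real.log X : ℂ)) * deriv g u - g u‖ * ‖(((chebTheta t - t) / t ^ 2 : ℝ) : ℂ)‖ :=
          norm_mul _ _
      _ ≤ A * (C₁ * (Real.exp (-2*c*Real.sqrt (Real.log t)) / t)) := by
          rw [Complex.norm_real, Real.norm_eq_abs]
          exact mul_le_mul hcoef hrb (abs_nonneg _) hA0
      _ = (A * C₁) * (Real.exp (-2*c*Real.sqrt (Real.log t)) / t) := by ring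
  have hti := stmt12_tail_int c hc ha1
  -- the main estimate
  set s : ℝ := Real.sqrt (Real.log a) with hsdef
  have hs0 : 0 ≤ s := Real.sqrt_nonneg _
  have hsqeq : Real.sqrt (ξ * Real.log X) = Real.sqrt 2 * s := by
    rw [hsdef, hloga, ← Real.sqrt_mul (by norm_num : (0:ℝ) ≤ 2)]
    congr 1
    ring
  have hsplit : Real.exp (-2*c*s) = Real.exp (-c * (Real.sqrt 2 * s)) * Real.exp (-(δ*s)) := by
    rw [← Real.exp_add]
    congr 1
    rw [hδdef]
    ring
  have hkey : (s/c + 1/(2*c^2)) * Real.exp (-(δ*s)) ≤ K := by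
    have h1 : s * Real.exp (-(δ*s)) ≤ 1/δ := by
      calc s * Real.exp (-(δ*s)) ≤ (Real.exp (δ*s)/δ) * Real.exp (-(δ*s)) := by
            have hse : s ≤ Real.exp (δ*s)/δ := by
              rw [le_div_iff₀ hδ]
              have := Real.add_one_le_exp (δ*s)
              nlinarith
            exact mul_le_mul_of_nonneg_right hse (Real.exp_pos _).le
        _ = 1/δ := by
            rw [div_mul_eq_mul_div, ← Real.exp_add]
            norm_num
    have h4 : Real.exp (-(δ*s)) ≤ 1 := Real.exp_le_one_iff.mpr (by
      have : 0 ≤ δ * s := by positivity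
      linarith)
    calc (s/c + 1/(2*c^2)) * Real.exp (-(δ*s))
        = (1/c) * (s * Real.exp (-(δ*s))) + (1/(2*c^2)) * Real.exp (-(δ*s)) := by ring
      _ ≤ (1/c) * (1/δ) + (1/(2*c^2)) * 1 := by
          refine add_le_add ?_ ?_
          · exact mul_le_mul_of_nonneg_left h1 (by positivity)
          · exact mul_le_mul_of_nonneg_left h4 (by positivity)
      _ = K := by rw [hKdef]; field_simp
  calc ‖∫ t in Set.Ioi a,
          ((2 / Real.log X) * deriv g (2 * Real.log t / Real.log X) -
            g (2 * Real.log t / Real.log X)) * ((chebTheta t - t) / t ^ 2 : ℝ)‖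
      ≤ ∫ t in Set.Ioi a, ‖((2 / Real.log X) * deriv g (2 * Real.log t / Real.log X) -
            g (2 * Real.log t / Real.log X)) * ((chebTheta t - t) / t ^ 2 : ℝ)‖ :=
        norm_integral_le_integral_norm _
    _ ≤ ∫ t in Set.Ioi a, (A * C₁) * (Real.exp (-2*c*Real.sqrt (Real.log t)) / t) := by
        refine integral_mono_of_nonneg (Filter.Eventually.of_forall (fun t => norm_nonneg _))
          (hti.1.const_mul (A * C₁)) ?_
        exact (ae_restrict_iff' measurableSet_Ioi).2 (Filter.Eventually.of_forall hbound)
    _ = (A * C₁) * ∫ t in Set.Ioi a, Real.exp (-2*c*Real.sqrt (Real.log t)) / t :=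
        integral_const_mul _ _
    _ = (A * C₁) * ((s/c + 1/(2*c^2)) * Real.exp (-2*c*s)) := by rw [hti.2]
    _ ≤ (A * C₁ * K + 1) * Real.exp (-c * Real.sqrt (ξ * Real.log X)) := by
        rw [hsqeq, hsplit]
        have hAC : 0 ≤ A * C₁ := mul_nonneg hA0 hC₁0.le
        have h5 : (A * C₁) * ((s/c + 1/(2*c^2)) * Real.exp (-(δ*s))) ≤ (A * C₁) * K :=
          mul_le_mul_of_nonneg_left hkey hAC
        have hE1 : (0:ℝ) ≤ Real.exp (-c * (Real.sqrt 2 * s)) := (Real.exp_pos _).le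
        calc (A * C₁) * ((s/c + 1/(2*c^2)) *
                (Real.exp (-c * (Real.sqrt 2 * s)) * Real.exp (-(δ*s))))
            = ((A * C₁) * ((s/c + 1/(2*c^2)) * Real.exp (-(δ*s)))) *
                Real.exp (-c * (Real.sqrt 2 * s)) := by ring
          _ ≤ ((A * C₁) * K) * Real.exp (-c * (Real.sqrt 2 * s)) :=
              mul_le_mul_of_nonneg_right h5 hE1
          _ ≤ (A * C₁ * K + 1) * Real.exp (-c * (Real.sqrt 2 * s)) :=
              mul_le_mul_of_nonneg_right (by linarith) hE1
end

section
/- Let φ be a Schwartz function on ℝ and k ≥ 2, X ≥ 2 with k ≤ X^5. Then (1/log X)·∫_ℝ ( ψ(1/4 + (k+1)/4 + 2πit/log X) + ψ(1/4 + (k−1)/4 + 2πit/log X) ) φ(t) dt = \hat{φ}(0)·(log(k²) − log 16)/log X + O_ε(k^{−1+ε}) for every ε > 0, where ψ = Γ'/Γ is the digamma function. -/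
/-!
On `Re z > 0`, `log Γ z = -γ z - log z + ∑ₙ (z/(n+1) - log (1 + z/(n+1)))` (Euler's limit formula
for `Γ`), and differentiating termwise gives `ψ z = lim_N (log N - ∑_{m ≤ N} 1/(z+m))`. With
`a = Re z`, telescoping `log (N+a+1) - log a = ∑_{m ≤ N} (log (m+a+1) - log (m+a))` against this
sum leaves terms of size `(1 + |Im z|)/(m+a)²`, so `ψ z = log (Re z) + O((1 + |Im z|)/Re z)`.
The two digamma values have real parts `(k+2)/4` and `k/4` and imaginary part `2πt/log X`, so
their sum is `log (k²/16) + O((1 + |t|)/k)` uniformly in `X ≥ 2`; integrating against `φ` costs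
only `∫ |φ|` and `∫ |t| |φ|`, which gives the bound `O(1/k)`.
-/

open Real Complex MeasureTheory

noncomputable def digammaC (z : ℂ) : ℂ := deriv Complex.Gamma z / Complex.Gamma z

open Filter Topology Finset

lemma norm_inv_sub_inv_add_le {w z : ℂ} {b : ℝ} (hb : 0 < b) (hw : b ≤ ‖w‖)
    (hwz : b ≤ ‖w + z‖) : ‖w⁻¹ - (w + z)⁻¹‖ ≤ ‖z‖ / b ^ 2 := by
  have hw0 : w ≠ 0 := norm_pos_iff.mp (hb.trans_le hw)
  have hwz0 : w + z ≠ 0 := norm_pos_iff.mp (hb.trans_le hwz)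
  calc ‖w⁻¹ - (w + z)⁻¹‖ = ‖z‖ / (‖w‖ * ‖w + z‖) := by
        rw [inv_sub_inv' hw0 hwz0, add_sub_cancel_left, norm_mul, norm_mul, norm_inv, norm_inv]
        ring
    _ ≤ ‖z‖ / b ^ 2 := by rw [sq]; gcongr

lemma summable_inv_nat_add_one_sq : Summable fun n : ℕ => (((n : ℝ) + 1) ^ 2)⁻¹ := by
  simpa using (summable_nat_add_iff 1).mpr (Real.summable_nat_pow_inv.mpr one_lt_two)

lemma norm_inv_nat_add_one_sub_inv_le (n : ℕ) {z : ℂ} {R : ℝ} (hz : -1 / 2 < z.re)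
    (hzR : ‖z‖ ≤ R) : ‖((n : ℂ) + 1)⁻¹ - ((n : ℂ) + 1 + z)⁻¹‖ ≤ 4 * R * (((n : ℝ) + 1) ^ 2)⁻¹ := by
  have hn : ‖(n : ℂ) + 1‖ = n + 1 := by exact_mod_cast Complex.norm_natCast (n + 1)
  have hnz : ((n : ℝ) + 1) / 2 ≤ ‖(n : ℂ) + 1 + z‖ := by
    refine le_trans ?_ (re_le_norm _)
    simp only [add_re, natCast_re, one_re]
    linarith [(n.cast_nonneg : (0 : ℝ) ≤ n)]
  refine (norm_inv_sub_inv_add_le (by positivity) (by rw [hn]; linarith) hnz).trans ?_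
  rw [show ‖z‖ / (((n : ℝ) + 1) / 2) ^ 2 = 4 * ‖z‖ * (((n : ℝ) + 1) ^ 2)⁻¹ by field_simp; ring]
  gcongr

section LogGammaSeries

noncomputable def logGammaTerm (n : ℕ) (z : ℂ) : ℂ :=
  z / (n + 1) - Complex.log (1 + z / (n + 1))

noncomputable def logGammaSeries (z : ℂ) : ℂ :=
  -eulerMascheroniConstant * z - Complex.log z + ∑' n, logGammaTerm n z

lemma re_one_add_div_nat_add_one_pos (n : ℕ) {z : ℂ} (hz : -1 / 2 < z.re) :
    0 < (1 + z / ((n : ℂ) + 1)).re := by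
  have hn : (0 : ℝ) < n + 1 := by positivity
  have : -1 / 2 < z.re / (n + 1) := by
    rw [lt_div_iff₀ hn]; nlinarith [(n.cast_nonneg : (0 : ℝ) ≤ n)]
  rw [← Nat.cast_add_one n, add_re, one_re, div_natCast_re]
  push_cast
  linarith

lemma hasDerivAt_logGammaTerm (n : ℕ) {z : ℂ} (hz : -1 / 2 < z.re) :
    HasDerivAt (logGammaTerm n) (((n : ℂ) + 1)⁻¹ - ((n : ℂ) + 1 + z)⁻¹) z := by
  have hre := re_one_add_div_nat_add_one_pos n hz
  have hn : (n : ℂ) + 1 ≠ 0 := Nat.cast_add_one_ne_zero n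
  have hnz : (n : ℂ) + 1 + z ≠ 0 := fun h => by
    rw [show 1 + z / ((n : ℂ) + 1) = ((n : ℂ) + 1 + z) / ((n : ℂ) + 1) by field_simp, h,
      zero_div, zero_re] at hre
    exact hre.false
  have hlin : HasDerivAt (fun w : ℂ => w / ((n : ℂ) + 1)) ((n : ℂ) + 1)⁻¹ z := by
    simpa [one_div] using (hasDerivAt_id z).div_const ((n : ℂ) + 1)
  refine (hlin.sub ((hlin.const_add 1).clog (Or.inl hre))).congr_deriv ?_
  field_simp

/- Termwise differentiation takes place on the convex set `{-1/2 < Re w} ∩ ball 0 R`: it contains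
`0`, where every `logGammaTerm` vanishes, so the series converges at one point of it. -/
lemma summable_logGammaTerm {z : ℂ} (hz : -1 / 2 < z.re) : Summable (logGammaTerm · z) :=
  summable_of_summable_hasDerivAt_of_isPreconnected
    (summable_inv_nat_add_one_sq.mul_left (4 * (‖z‖ + 1)))
    ((isOpen_lt continuous_const continuous_re).inter Metric.isOpen_ball)
    ((convex_halfSpace_re_gt _).inter (convex_ball 0 _)).isPreconnected
    (fun n w hw => hasDerivAt_logGammaTerm n hw.1)
    (fun n w hw => norm_inv_nat_add_one_sub_inv_le n hw.1 (mem_ball_zero_iff.mp hw.2).le)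
    (y₀ := 0) ⟨by norm_num, by simp; positivity⟩ (by simp [logGammaTerm])
    ⟨hz, by simp⟩

lemma hasDerivAt_tsum_logGammaTerm {z : ℂ} (hz : -1 / 2 < z.re) :
    HasDerivAt (fun w => ∑' n, logGammaTerm n w)
      (∑' n : ℕ, (((n : ℂ) + 1)⁻¹ - ((n : ℂ) + 1 + z)⁻¹)) z :=
  hasDerivAt_tsum_of_isPreconnected
    (summable_inv_nat_add_one_sq.mul_left (4 * (‖z‖ + 1)))
    ((isOpen_lt continuous_const continuous_re).inter Metric.isOpen_ball)
    ((convex_halfSpace_re_gt _).inter (convex_ball 0 _)).isPreconnected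
    (fun n w hw => hasDerivAt_logGammaTerm n hw.1)
    (fun n w hw => norm_inv_nat_add_one_sub_inv_le n hw.1 (mem_ball_zero_iff.mp hw.2).le)
    (y₀ := 0) ⟨by norm_num, by simp; positivity⟩ (by simp [logGammaTerm])
    ⟨hz, by simp⟩

lemma hasDerivAt_logGammaSeries {z : ℂ} (hz : 0 < z.re) :
    HasDerivAt logGammaSeries (-eulerMascheroniConstant - z⁻¹ +
      ∑' n : ℕ, (((n : ℂ) + 1)⁻¹ - ((n : ℂ) + 1 + z)⁻¹)) z :=
  ((((hasDerivAt_id z).const_mul (-eulerMascheroniConstant : ℂ)).sub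
    (hasDerivAt_log (Or.inl hz))).add (hasDerivAt_tsum_logGammaTerm (by linarith))).congr_deriv
    (by simp)

lemma prod_range_succ_add_eq (z : ℂ) (N : ℕ) :
    ∏ j ∈ range (N + 1), (z + j) = z * N.factorial * ∏ n ∈ range N, (1 + z / (n + 1)) := by
  induction N with
  | zero => simp
  | succ N ih =>
    rw [prod_range_succ, ih, prod_range_succ, Nat.factorial_succ]
    have : (N : ℂ) + 1 ≠ 0 := Nat.cast_add_one_ne_zero N
    push_cast
    field_simp
    ring

lemma exp_partialSum_logGammaSeries {z : ℂ} (hz : 0 < z.re) {N : ℕ} (hN : N ≠ 0) :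
    Complex.exp (-eulerMascheroniConstant * z - Complex.log z +
        ∑ n ∈ range N, logGammaTerm n z) =
      GammaSeq z N *
        Complex.exp (z * ((harmonic N : ℝ) - eulerMascheroniConstant - Real.log N)) := by
  have hz0 : z ≠ 0 := fun h => by simp [h] at hz
  have hterm : ∀ n : ℕ, 1 + z / (n + 1) ≠ 0 := fun n h => by
    simpa [h] using re_one_add_div_nat_add_one_pos n (z := z) (by linarith)
  rw [Complex.GammaSeq, prod_range_succ_add_eq]
  set P := ∏ n ∈ range N, (1 + z / ((n : ℂ) + 1))
  set H := ∑ n ∈ range N, ((n : ℂ) + 1)⁻¹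
  have hP : P ≠ 0 := prod_ne_zero_iff.mpr fun n _ => hterm n
  have hH : ((harmonic N : ℝ) : ℂ) = H := by simp [H, harmonic]
  have hlog : Complex.exp (∑ n ∈ range N, Complex.log (1 + z / (n + 1))) = P :=
    (Complex.exp_sum _ _).trans (prod_congr rfl fun n _ => exp_log (hterm n))
  have hlin : ∑ n ∈ range N, z / ((n : ℂ) + 1) = z * H := by
    simp only [H, mul_sum, div_eq_mul_inv]
  have hfac : ((N.factorial : ℕ) : ℂ) ≠ 0 := Nat.cast_ne_zero.mpr N.factorial_ne_zero
  simp only [logGammaTerm, sum_sub_distrib, hH, hlin]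
  rw [cpow_def_of_ne_zero (Nat.cast_ne_zero.mpr hN), ← natCast_log,
    show -(eulerMascheroniConstant : ℂ) * z - Complex.log z +
      (z * H - ∑ n ∈ range N, Complex.log (1 + z / (n + 1))) =
      (z * H - eulerMascheroniConstant * z) -
        (Complex.log z + ∑ n ∈ range N, Complex.log (1 + z / (n + 1))) by ring,
    Complex.exp_sub, Complex.exp_add, exp_log hz0, hlog,
    show z * H - eulerMascheroniConstant * z =
      Real.log N * z + z * (H - eulerMascheroniConstant - Real.log N) by ring,
    Complex.exp_add]
  field_simp

lemma tendsto_harmonic_sub_eulerMascheroniConstant_sub_log :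
    Tendsto (fun N : ℕ => (harmonic N : ℝ) - eulerMascheroniConstant - Real.log N)
      atTop (𝓝 0) := by
  simpa [sub_right_comm] using Real.tendsto_harmonic_sub_log.sub_const eulerMascheroniConstant

lemma exp_logGammaSeries {z : ℂ} (hz : 0 < z.re) :
    Complex.exp (logGammaSeries z) = Complex.Gamma z := by
  have hpartial : Tendsto (fun N => -eulerMascheroniConstant * z - Complex.log z +
      ∑ n ∈ range N, logGammaTerm n z) atTop (𝓝 (logGammaSeries z)) :=
    ((summable_logGammaTerm (by linarith)).hasSum.tendsto_sum_nat).const_add _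
  have hcorr : Tendsto (fun N : ℕ => Complex.exp
      (z * ((harmonic N : ℝ) - eulerMascheroniConstant - Real.log N))) atTop (𝓝 1) := by
    simpa using (((continuous_ofReal.tendsto 0).comp
      tendsto_harmonic_sub_eulerMascheroniConstant_sub_log).const_mul z).cexp
  refine tendsto_nhds_unique hpartial.cexp ?_
  simpa using ((GammaSeq_tendsto_Gamma z).mul hcorr).congr' <|
    (eventually_ne_atTop 0).mono fun N hN => (exp_partialSum_logGammaSeries hz hN).symm

end LogGammaSeries

section Digamma

lemma digammaC_eq_tsum {z : ℂ} (hz : 0 < z.re) : digammaC z =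
    -eulerMascheroniConstant - z⁻¹ + ∑' n : ℕ, (((n : ℂ) + 1)⁻¹ - ((n : ℂ) + 1 + z)⁻¹) := by
  have hGamma : Complex.Gamma =ᶠ[𝓝 z] fun w => Complex.exp (logGammaSeries w) :=
    ((isOpen_lt continuous_const continuous_re).eventually_mem hz).mono
      fun w hw => (exp_logGammaSeries hw).symm
  rw [digammaC, ((hasDerivAt_logGammaSeries hz).cexp.congr_of_eventuallyEq hGamma).deriv,
    exp_logGammaSeries hz, mul_div_cancel_left₀ _ (Gamma_ne_zero_of_re_pos hz)]

lemma tendsto_log_sub_sum_inv_digammaC {z : ℂ} (hz : 0 < z.re) :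
    Tendsto (fun N : ℕ => (Real.log N : ℂ) - ∑ m ∈ range (N + 1), ((m : ℂ) + z)⁻¹) atTop
      (𝓝 (digammaC z)) := by
  have hsum : Summable fun n : ℕ => ((n : ℂ) + 1)⁻¹ - ((n : ℂ) + 1 + z)⁻¹ :=
    .of_norm_bounded (summable_inv_nat_add_one_sq.mul_left (4 * ‖z‖))
      fun n => norm_inv_nat_add_one_sub_inv_le n (by linarith) le_rfl
  have hlim := (hsum.hasSum.tendsto_sum_nat.const_add (-eulerMascheroniConstant - z⁻¹)).sub
    ((continuous_ofReal.tendsto 0).comp tendsto_harmonic_sub_eulerMascheroniConstant_sub_log)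
  rw [← digammaC_eq_tsum hz, ofReal_zero, sub_zero] at hlim
  refine hlim.congr fun N => ?_
  simp only [Function.comp_apply, sum_sub_distrib, sum_range_succ' _ N, harmonic]
  push_cast
  ring

lemma continuousOn_digammaC : ContinuousOn digammaC {z : ℂ | 0 < z.re} := by
  have hGamma : DifferentiableOn ℂ Complex.Gamma {z : ℂ | 0 < z.re} := fun z hz =>
    (differentiableAt_Gamma z fun m h => by
      have : 0 < (-(m : ℂ)).re := h ▸ hz
      rw [neg_re, natCast_re] at this
      linarith [(m.cast_nonneg : (0 : ℝ) ≤ m)]).differentiableWithinAt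
  exact (hGamma.deriv (isOpen_lt continuous_const continuous_re)).continuousOn.div
    hGamma.continuousOn fun z hz => Gamma_ne_zero_of_re_pos hz

lemma sum_range_inv_add_sq_le {a : ℝ} (ha : 1 / 2 ≤ a) (N : ℕ) :
    ∑ m ∈ range N, (((m : ℝ) + a) ^ 2)⁻¹ ≤ 3 / a := by
  have hterm : ∀ m : ℕ, (((m : ℝ) + a) ^ 2)⁻¹ ≤ 3 / (m + a) - 3 / ((m + 1 : ℕ) + a) := by
    intro m
    have hm : (0 : ℝ) ≤ m := m.cast_nonneg
    rw [Nat.cast_add_one, div_sub_div _ _ (by positivity) (by positivity),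
      le_div_iff₀ (by positivity)]
    field_simp
    nlinarith
  have hN : 0 ≤ 3 / ((N : ℝ) + a) := by positivity
  calc ∑ m ∈ range N, (((m : ℝ) + a) ^ 2)⁻¹
      ≤ ∑ m ∈ range N, (3 / (m + a) - 3 / ((m + 1 : ℕ) + a)) := sum_le_sum fun m _ => hterm m
    _ = 3 / a - 3 / (N + a) := by rw [sum_range_sub' (fun m : ℕ => 3 / ((m : ℝ) + a))]; simp
    _ ≤ 3 / a := by linarith

lemma abs_log_add_one_sub_log_sub_inv_le {x : ℝ} (hx : 0 < x) :
    |Real.log (x + 1) - Real.log x - x⁻¹| ≤ (x ^ 2)⁻¹ := by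
  have hlog : Real.log (x + 1) - Real.log x = Real.log ((x + 1) / x) :=
    (Real.log_div (by positivity) hx.ne').symm
  have hupper := Real.log_le_sub_one_of_pos (show 0 < (x + 1) / x by positivity)
  have hlower := Real.one_sub_inv_le_log_of_pos (show 0 < (x + 1) / x by positivity)
  have e1 : (x + 1) / x - 1 = x⁻¹ := by field_simp; ring
  have e2 : 1 - ((x + 1) / x)⁻¹ = x⁻¹ - (x * (x + 1))⁻¹ := by field_simp; ring
  have e3 : (x * (x + 1))⁻¹ ≤ (x ^ 2)⁻¹ := by gcongr; nlinarith
  rw [hlog, abs_le]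
  constructor <;> linarith [inv_pos.mpr (show 0 < x * (x + 1) by positivity)]

lemma norm_log_add_one_sub_log_sub_inv_le {z : ℂ} (hz : 0 < z.re) (m : ℕ) :
    ‖((Real.log (m + z.re + 1) - Real.log (m + z.re) : ℝ) : ℂ) - ((m : ℂ) + z)⁻¹‖ ≤
      (1 + |z.im|) * (((m : ℝ) + z.re) ^ 2)⁻¹ := by
  have hma : 0 < (m : ℝ) + z.re := by positivity
  have hw : ‖((m : ℂ) + z.re)‖ = m + z.re := by
    rw [← ofReal_natCast, ← ofReal_add, norm_real, Real.norm_of_nonneg hma.le]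
  have hz' : (m : ℂ) + z = ((m : ℂ) + z.re) + z.im * I := by
    conv_lhs => rw [← re_add_im z]
    ring
  have hwz : (m : ℝ) + z.re ≤ ‖((m : ℂ) + z.re) + z.im * I‖ :=
    le_trans (by simp) (re_le_norm _)
  have hlog := abs_log_add_one_sub_log_sub_inv_le hma
  have hinv := norm_inv_sub_inv_add_le hma hw.ge hwz
  rw [norm_mul, norm_I, mul_one, norm_real, Real.norm_eq_abs, div_eq_mul_inv] at hinv
  rw [show ((Real.log (m + z.re + 1) - Real.log (m + z.re) : ℝ) : ℂ) - ((m : ℂ) + z)⁻¹ =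
      ((Real.log (m + z.re + 1) - Real.log (m + z.re) - (m + z.re)⁻¹ : ℝ) : ℂ) +
        (((m : ℂ) + z.re)⁻¹ - ((m : ℂ) + z)⁻¹) by push_cast; ring]
  refine (norm_add_le _ _).trans ?_
  rw [norm_real, Real.norm_eq_abs, hz']
  linarith

lemma norm_digammaC_sub_log_re_le {z : ℂ} (hz : 1 / 2 ≤ z.re) :
    ‖digammaC z - Real.log z.re‖ ≤ 3 * (1 + |z.im|) / z.re := by
  set a := z.re
  have hsum : ∀ N : ℕ, ∑ m ∈ range (N + 1),
      (((Real.log (m + a + 1) - Real.log (m + a) : ℝ) : ℂ) - ((m : ℂ) + z)⁻¹) =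
      ((Real.log (N + a + 1) - Real.log a : ℝ) : ℂ) - ∑ m ∈ range (N + 1), ((m : ℂ) + z)⁻¹ := by
    intro N
    have htel := sum_range_sub (fun m : ℕ => Real.log (m + a)) (N + 1)
    simp only [Nat.cast_add_one, Nat.cast_zero, zero_add, add_right_comm _ (1 : ℝ) a] at htel
    rw [sum_sub_distrib, ← htel, ofReal_sum]
  have hlim : Tendsto (fun N : ℕ => ((Real.log (N + a + 1) - Real.log a : ℝ) : ℂ) -
      ∑ m ∈ range (N + 1), ((m : ℂ) + z)⁻¹) atTop (𝓝 (digammaC z - Real.log a)) := by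
    have hshift := (continuous_ofReal.tendsto 0).comp
      ((Real.tendsto_log_comp_add_sub_log (1 + a)).comp tendsto_natCast_atTop_atTop)
    have := ((tendsto_log_sub_sum_inv_digammaC (by linarith)).sub_const (Real.log a : ℂ)).add
      hshift
    rw [ofReal_zero, add_zero] at this
    refine this.congr fun N => ?_
    simp only [Function.comp_apply, ← add_assoc, add_right_comm _ (1 : ℝ) a]
    push_cast
    ring
  refine le_of_tendsto' hlim.norm fun N => ?_
  rw [← hsum N]
  calc _ ≤ ∑ m ∈ range (N + 1), (1 + |z.im|) * (((m : ℝ) + a) ^ 2)⁻¹ :=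
        (norm_sum_le _ _).trans
          (sum_le_sum fun m _ => norm_log_add_one_sub_log_sub_inv_le (by linarith) m)
    _ ≤ (1 + |z.im|) * (3 / a) := by
        rw [← mul_sum]; gcongr; exact sum_range_inv_add_sq_le hz _
    _ = 3 * (1 + |z.im|) / a := by ring

end Digamma

lemma log_add_log_sub_log_sq_le {κ : ℝ} (hκ : 0 < κ) :
    |Real.log ((κ + 2) / 4) + Real.log (κ / 4) - (Real.log (κ ^ 2) - Real.log 16)| ≤ 2 / κ := by
  have hsq : Real.log (κ ^ 2) - Real.log 16 = 2 * Real.log (κ / 4) := by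
    rw [← Real.log_div (by positivity) (by norm_num), show κ ^ 2 / 16 = (κ / 4) ^ 2 by ring,
      Real.log_pow]
    norm_num
  have hratio : Real.log ((κ + 2) / 4) - Real.log (κ / 4) = Real.log (1 + 2 / κ) := by
    rw [← Real.log_div (by positivity) (by positivity)]; congr 1; field_simp
  rw [hsq, show ∀ x y : ℝ, x + y - 2 * y = x - y by intros; ring, hratio,
    abs_of_nonneg (Real.log_nonneg (by linarith [div_pos two_pos hκ]))]
  linarith [Real.log_le_sub_one_of_pos (show 0 < 1 + 2 / κ by positivity)]

lemma norm_digammaC_pair_sub_log_le {κ : ℝ} (hκ : 2 ≤ κ) {w : ℂ} (hw : w.re = 0) :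
    ‖digammaC (1 / 4 + ((κ : ℂ) + 1) / 4 + w) + digammaC (1 / 4 + ((κ : ℂ) - 1) / 4 + w) -
      (Real.log (κ ^ 2) - Real.log 16 : ℝ)‖ ≤ (26 + 24 * |w.im|) / κ := by
  have h₁ := norm_digammaC_sub_log_re_le (z := 1 / 4 + ((κ : ℂ) + 1) / 4 + w)
    (by simp [hw]; linarith)
  have h₂ := norm_digammaC_sub_log_re_le (z := 1 / 4 + ((κ : ℂ) - 1) / 4 + w)
    (by simp [hw]; linarith)
  have h₃ := log_add_log_sub_log_sq_le (by linarith : 0 < κ)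
  simp only [add_re, add_im, div_ofNat_re, div_ofNat_im, one_re, one_im, ofReal_re, ofReal_im,
    sub_re, sub_im, hw, zero_div, add_zero, zero_add, sub_zero] at h₁ h₂
  rw [show 1 / 4 + (κ + 1) / 4 = (κ + 2) / 4 by ring] at h₁
  rw [show 1 / 4 + (κ - 1) / 4 = κ / 4 by ring] at h₂
  have h₁' : 3 * (1 + |w.im|) / ((κ + 2) / 4) ≤ 12 * (1 + |w.im|) / κ := by
    rw [div_div_eq_mul_div, mul_comm, ← mul_assoc]; gcongr; norm_num; linarith
  have h₂' : 3 * (1 + |w.im|) / (κ / 4) = 12 * (1 + |w.im|) / κ := by field_simp; ring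
  rw [show ∀ u v : ℂ, u + v - (Real.log (κ ^ 2) - Real.log 16 : ℝ) =
      (u - Real.log ((κ + 2) / 4)) + (v - Real.log (κ / 4)) +
      ((Real.log ((κ + 2) / 4) + Real.log (κ / 4) - (Real.log (κ ^ 2) - Real.log 16) : ℝ) : ℂ) by
    intros; push_cast; ring]
  refine norm_add₃_le.trans ?_
  rw [norm_real, Real.norm_eq_abs]
  calc _ ≤ 12 * (1 + |w.im|) / κ + 12 * (1 + |w.im|) / κ + 2 / κ := by linarith
    _ = (26 + 24 * |w.im|) / κ := by ring

lemma norm_digammaC_pair_vertical_sub_log_le {κ L : ℝ} (hκ : 2 ≤ κ) (hL : Real.log 2 ≤ L)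
    (t : ℝ) :
    ‖digammaC (1 / 4 + ((κ : ℂ) + 1) / 4 + 2 * π * I * t / (L : ℂ)) +
        digammaC (1 / 4 + ((κ : ℂ) - 1) / 4 + 2 * π * I * t / (L : ℂ)) -
      (Real.log (κ ^ 2) - Real.log 16 : ℝ)‖ ≤ 26 / κ + 240 / κ * ‖t‖ := by
  have hL' : 0.69 < L := by linarith [Real.log_two_gt_d9]
  have him : |(2 * π * I * t / (L : ℂ)).im| ≤ 10 * |t| := by
    rw [show (2 * π * I * t / (L : ℂ)) = ((2 * π * t / L : ℝ) : ℂ) * I by push_cast; ring,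
      mul_I_im, ofReal_re, abs_div, abs_mul, abs_of_pos (by positivity : (0 : ℝ) < 2 * π),
      abs_of_pos (by linarith : 0 < L), div_le_iff₀ (by linarith)]
    nlinarith [abs_nonneg t, pi_lt_d2]
  calc _ ≤ (26 + 24 * |(2 * π * I * t / (L : ℂ)).im|) / κ :=
        norm_digammaC_pair_sub_log_le hκ (by simp)
    _ ≤ (26 + 24 * (10 * |t|)) / κ := by gcongr
    _ = 26 / κ + 240 / κ * ‖t‖ := by rw [Real.norm_eq_abs]; ring

lemma continuous_digammaC_add_vertical {c : ℂ} (hc : 0 < c.re) (L : ℝ) :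
    Continuous fun t : ℝ => digammaC (c + 2 * π * I * t / (L : ℂ)) :=
  continuousOn_digammaC.comp_continuous (by fun_prop) fun t => by simpa using hc

lemma norm_integral_mul_sub_const_mul_le {f φ : ℝ → ℂ} {c : ℂ} {A B : ℝ}
    (hf : AEStronglyMeasurable f) (hφ : Integrable φ)
    (hφ₁ : Integrable fun t => ‖t‖ * ‖φ t‖) (hfc : ∀ t, ‖f t - c‖ ≤ A + B * ‖t‖) :
    ‖(∫ t, f t * φ t) - c * ∫ t, φ t‖ ≤ A * (∫ t, ‖φ t‖) + B * ∫ t, ‖t‖ * ‖φ t‖ := by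
  have hdom : Integrable fun t => A * ‖φ t‖ + B * (‖t‖ * ‖φ t‖) :=
    (hφ.norm.const_mul A).add (hφ₁.const_mul B)
  have hbound : ∀ t, ‖(f t - c) * φ t‖ ≤ A * ‖φ t‖ + B * (‖t‖ * ‖φ t‖) := fun t => by
    rw [norm_mul]
    nlinarith [mul_le_mul_of_nonneg_right (hfc t) (norm_nonneg (φ t))]
  have hint : Integrable fun t => (f t - c) * φ t :=
    hdom.mono' ((hf.sub aestronglyMeasurable_const).mul hφ.aestronglyMeasurable)
      (ae_of_all _ hbound)
  have hfφ : Integrable fun t => f t * φ t :=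
    (hint.add (hφ.const_mul c)).congr (ae_of_all _ fun t => by simp only [Pi.add_apply]; ring)
  calc ‖(∫ t, f t * φ t) - c * ∫ t, φ t‖ = ‖∫ t, (f t - c) * φ t‖ := by
        rw [← integral_const_mul, ← integral_sub hfφ (hφ.const_mul c)]
        simp_rw [sub_mul]
    _ ≤ ∫ t, (A * ‖φ t‖ + B * (‖t‖ * ‖φ t‖)) :=
        norm_integral_le_of_norm_le hdom (ae_of_all _ hbound)
    _ = A * (∫ t, ‖φ t‖) + B * ∫ t, ‖t‖ * ‖φ t‖ := by
        rw [integral_add (hφ.norm.const_mul A) (hφ₁.const_mul B), integral_const_mul,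
          integral_const_mul]

/-- for Schwartz `φ`, integers `k ≥ 2` and reals `X ≥ 2` with `k ≤ X^5`,
`(1/log X)∫ (ψ(1/4+(k+1)/4+2πit/log X) + ψ(1/4+(k-1)/4+2πit/log X)) φ(t) dt
  = φ̂(0)(log k² - log 16)/log X + O_ε(k^{-1+ε})`. -/
theorem stmt13 (φ : SchwartzMap ℝ ℂ) (ε : ℝ) (hε : 0 < ε) :
    ∃ C : ℝ, 0 < C ∧ ∀ (k : ℕ) (X : ℝ), 2 ≤ k → 2 ≤ X → (k : ℝ) ≤ X ^ 5 →
      ‖(1 / (Real.log X : ℂ)) *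
          (∫ t : ℝ,
            (digammaC (1 / 4 + ((k : ℂ) + 1) / 4 +
                2 * Real.pi * Complex.I * t / (Real.log X : ℂ)) +
              digammaC (1 / 4 + ((k : ℂ) - 1) / 4 +
                2 * Real.pi * Complex.I * t / (Real.log X : ℂ))) * φ t) -
        (∫ t : ℝ, φ t) *
          ((Real.log ((k : ℝ) ^ 2) - Real.log 16) / Real.log X : ℝ)‖
        ≤ C * (k : ℝ) ^ (-1 + ε) := by
  have hφ₁ : Integrable fun t : ℝ => ‖t‖ * ‖φ t‖ := by
    simpa using φ.integrable_pow_mul volume 1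
  refine ⟨52 * (∫ t, ‖φ t‖) + 480 * (∫ t, ‖t‖ * ‖φ t‖) + 1, by positivity,
    fun k X hk hX _ => ?_⟩
  have hk' : (2 : ℝ) ≤ k := by exact_mod_cast hk
  have hL : Real.log 2 ≤ Real.log X := Real.log_le_log two_pos hX
  have hcont := (continuous_digammaC_add_vertical (c := 1 / 4 + ((k : ℂ) + 1) / 4)
      (by simp; positivity) (Real.log X)).add
    (continuous_digammaC_add_vertical (c := 1 / 4 + ((k : ℂ) - 1) / 4) (by simp; linarith)
      (Real.log X))
  have hint := norm_integral_mul_sub_const_mul_le hcont.aestronglyMeasurable φ.integrable hφ₁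
    fun t => by simpa only [ofReal_natCast, Pi.add_apply] using
      norm_digammaC_pair_vertical_sub_log_le hk' hL t
  have hL' : ‖1 / (Real.log X : ℂ)‖ ≤ 2 := by
    have := Real.log_two_gt_d9
    rw [norm_div, norm_one, norm_real, Real.norm_of_nonneg (by linarith),
      div_le_iff₀ (by linarith)]
    linarith
  have hk_pow : (k : ℝ)⁻¹ ≤ (k : ℝ) ^ (-1 + ε) := by
    rw [← Real.rpow_neg_one]
    exact Real.rpow_le_rpow_of_exponent_le (by linarith) (by linarith)
  rw [show ∀ (u v : ℂ) (c : ℝ), 1 / (Real.log X : ℂ) * u - v * ((c / Real.log X : ℝ) : ℂ) =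
    1 / (Real.log X : ℂ) * (u - c * v) from fun u v c => by push_cast; ring, norm_mul]
  calc _ ≤ 2 * (26 / k * (∫ t, ‖φ t‖) + 240 / k * ∫ t, ‖t‖ * ‖φ t‖) :=
        mul_le_mul hL' hint (norm_nonneg _) zero_le_two
    _ = (52 * (∫ t, ‖φ t‖) + 480 * ∫ t, ‖t‖ * ‖φ t‖) * (k : ℝ)⁻¹ := by ring
    _ ≤ _ := mul_le_mul (by linarith) hk_pow (by positivity) (by positivity)
end

section
/- Fix even k ≥ 2 and positive integers m, n with mn ≤ (k/(4πe))². Then Σ_{c ≥ 1} c^{−1/2} τ(c) (m,n,c)^{1/2} · (1/(k−1)!) · (2π√(mn)/c)^{k−1} ≪ 2^{−k}·(mn)^{1/4}·log(2mn)·∏_{p | (m,n)} (1 + 3/√p), where τ is the divisor function and (m,n,c) the gcd. -/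
/-!
Write `k = j + 1` and `X = 2π√(mn)`. The hypothesis says `2eX ≤ k`, so comparing `(2eX)^j/j!`
with the exponential series gives `X^j/j! ≤ e^k/(2e)^j = 2e·2^{-k}`; it also forces `k ≥ 4πe`,
hence `j ≥ 3`. With `τ(c) ≤ c`, `(m,n,c) ≤ (m,n)` and `c^{-1/2} ≤ 1`, the `c`-th term is then
at most `√(m,n) · 2e·2^{-k} / c²`, and summing gives `(π²/6)·2e·2^{-k}·√(m,n)`. Finally
`√(m,n) ≤ (mn)^{1/4}`, while `log(2mn) ≥ log 2` and the product over primes is at least `1`.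
-/

open Real
open scoped Nat

lemma mul_sqrt_le_of_le_div_sq {x a k : ℝ} (ha : 0 < a) (hk : 0 ≤ k) (h : x ≤ (k / a) ^ 2) :
    a * √x ≤ k := by
  have hsqrt := sqrt_le_sqrt h
  rw [sqrt_sq (by positivity)] at hsqrt
  exact (le_div_iff₀' ha).mp hsqrt

lemma pow_div_factorial_le_of_two_exp_mul_le {x : ℝ} (hx : 0 ≤ x) {j : ℕ}
    (h : 2 * exp 1 * x ≤ j + 1) : x ^ j / j ! ≤ 2 * exp 1 / 2 ^ (j + 1) := by
  have hseries : (2 * exp 1) ^ j * x ^ j / j ! ≤ exp 1 ^ (j + 1) := by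
    calc _ = (2 * exp 1 * x) ^ j / j ! := by rw [← mul_pow]
      _ ≤ exp (2 * exp 1 * x) := Real.pow_div_factorial_le_exp _ (by positivity) j
      _ ≤ exp ((j + 1 : ℕ) * 1) := exp_le_exp.mpr (by push_cast; linarith)
      _ = exp 1 ^ (j + 1) := exp_nat_mul 1 (j + 1)
  calc x ^ j / j ! = (2 * exp 1) ^ j * x ^ j / j ! / (2 * exp 1) ^ j := by
        field_simp
    _ ≤ exp 1 ^ (j + 1) / (2 * exp 1) ^ j := by gcongr
    _ = 2 * exp 1 / 2 ^ (j + 1) := by field_simp; ring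

-- The `c`-th term of the sum, with `g = (m,n)`, `j = k - 1` and `X = 2π√(mn)`.
noncomputable def besselMajorant (g j : ℕ) (X : ℝ) (c : ℕ) : ℝ :=
  if 1 ≤ c then
    (c : ℝ) ^ (-(1 : ℝ) / 2) * (c.divisors.card : ℝ) * √(Nat.gcd g c : ℕ) * (1 / (j ! : ℝ)) *
      (X / c) ^ j
  else 0

lemma besselMajorant_nonneg (g j : ℕ) {X : ℝ} (hX : 0 ≤ X) (c : ℕ) :
    0 ≤ besselMajorant g j X c := by
  unfold besselMajorant
  split_ifs <;> positivity

lemma besselMajorant_le {g j : ℕ} (hg : 0 < g) (hj : 3 ≤ j) {X : ℝ} (hX : 0 ≤ X) (c : ℕ) :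
    besselMajorant g j X c ≤ √g * (X ^ j / j !) * (1 / (c : ℝ) ^ 2) := by
  rcases Nat.eq_zero_or_pos c with rfl | hc
  · simp [besselMajorant]
  have hc1 : (1 : ℝ) ≤ c := by exact_mod_cast hc
  have hτ : (c.divisors.card : ℝ) ≤ c := by exact_mod_cast Nat.card_divisors_le_self c
  have hgcd : √(Nat.gcd g c : ℕ) ≤ √g :=
    sqrt_le_sqrt (by exact_mod_cast Nat.le_of_dvd hg (Nat.gcd_dvd_left g c))
  have hrpow : (c : ℝ) ^ (-(1 : ℝ) / 2) ≤ 1 := rpow_le_one_of_one_le_of_nonpos hc1 (by norm_num)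
  rw [besselMajorant, if_pos (show 1 ≤ c from hc)]
  calc _ ≤ 1 * (c : ℝ) * √g * (1 / (j ! : ℝ)) * (X / c) ^ j := by gcongr
    _ = √g * (X ^ j / j !) * (c / (c : ℝ) ^ j) := by rw [div_pow]; ring
    _ ≤ √g * (X ^ j / j !) * (c / (c : ℝ) ^ 3) := by gcongr
    _ = √g * (X ^ j / j !) * (1 / (c : ℝ) ^ 2) := by field_simp

lemma tsum_besselMajorant_le {g j : ℕ} (hg : 0 < g) (hj : 3 ≤ j) {X : ℝ} (hX : 0 ≤ X) :
    ∑' c, besselMajorant g j X c ≤ √g * (X ^ j / j !) * (π ^ 2 / 6) := by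
  have hmaj := hasSum_zeta_two.mul_left (√g * (X ^ j / j !))
  have hle := besselMajorant_le hg hj hX
  calc _ ≤ ∑' c : ℕ, √g * (X ^ j / j !) * (1 / (c : ℝ) ^ 2) :=
        (hmaj.summable.of_nonneg_of_le (besselMajorant_nonneg g j hX) hle).tsum_le_tsum hle
          hmaj.summable
    _ = _ := hmaj.tsum_eq

lemma sqrt_gcd_le_rpow_quarter {m n : ℕ} (hm : 0 < m) (hn : 0 < n) :
    √(Nat.gcd m n) ≤ ((m * n : ℕ) : ℝ) ^ ((1 : ℝ) / 4) := by
  have hsq : ((Nat.gcd m n : ℕ) : ℝ) ^ 2 ≤ (m * n : ℕ) := by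
    exact_mod_cast (sq (Nat.gcd m n)).trans_le <| Nat.mul_le_mul
      (Nat.le_of_dvd hm (Nat.gcd_dvd_left m n)) (Nat.le_of_dvd hn (Nat.gcd_dvd_right m n))
  rw [show (1 : ℝ) / 4 = 1 / 2 * (1 / 2) by norm_num, rpow_mul (by positivity),
    ← sqrt_eq_rpow, ← sqrt_eq_rpow]
  exact sqrt_le_sqrt (le_sqrt_of_sq_le hsq)

lemma one_le_prod_one_add_div_sqrt (s : Finset ℕ) {a : ℝ} (ha : 0 ≤ a) :
    1 ≤ ∏ p ∈ s, (1 + a / √p) :=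
  Finset.one_le_prod fun p _ => le_add_of_nonneg_right (by positivity)

/-- there is an absolute constant `C` such that for all even `k ≥ 2`
and positive integers `m, n` with `mn ≤ (k/(4πe))²`,
`Σ_{c ≥ 1} c^{-1/2} τ(c) (m,n,c)^{1/2} (1/(k-1)!) (2π√(mn)/c)^{k-1}
  ≤ C · 2^{-k} (mn)^{1/4} log(2mn) ∏_{p|(m,n)} (1+3/√p)`. -/
theorem stmt16 :
    ∃ C : ℝ, 0 < C ∧ ∀ k m n : ℕ, 2 ≤ k → Even k → 0 < m → 0 < n →
      ((m * n : ℕ) : ℝ) ≤ ((k : ℝ) / (4 * Real.pi * Real.exp 1)) ^ 2 →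
      (∑' c : ℕ, (if 1 ≤ c then
          ((c : ℝ)) ^ (-(1 : ℝ) / 2) * (c.divisors.card : ℝ) *
            Real.sqrt (Nat.gcd (Nat.gcd m n) c) *
            (1 / (Nat.factorial (k - 1))) *
            (2 * Real.pi * Real.sqrt ((m * n : ℕ)) / c) ^ (k - 1)
        else 0))
        ≤ C * (2 : ℝ) ^ (-(k : ℝ)) * ((m * n : ℕ) : ℝ) ^ ((1 : ℝ) / 4) *
            Real.log (2 * ((m * n : ℕ) : ℝ)) *
            ∏ p ∈ (Nat.gcd m n).primeFactors, (1 + 3 / Real.sqrt p) := by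
  refine ⟨2 * exp 1 * (π ^ 2 / 6) / log 2, by positivity, ?_⟩
  intro k m n _ _ hm hn hmn
  obtain ⟨j, rfl⟩ : ∃ j, k = j + 1 := ⟨k - 1, by omega⟩
  have hmn1 : (1 : ℝ) ≤ (m * n : ℕ) := by exact_mod_cast Nat.mul_pos hm hn
  have hk : 4 * π * exp 1 * √((m * n : ℕ) : ℝ) ≤ (j + 1 : ℕ) :=
    mul_sqrt_le_of_le_div_sq (by positivity) (by positivity) hmn
  have hj : 3 ≤ j := by
    have h4 : (4 : ℝ) < 4 * π * exp 1 := by nlinarith [pi_gt_three, exp_one_gt_d9]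
    have h1 : 4 * π * exp 1 ≤ 4 * π * exp 1 * √((m * n : ℕ) : ℝ) :=
      le_mul_of_one_le_right (by positivity) (one_le_sqrt.mpr hmn1)
    have : (4 : ℝ) < (j + 1 : ℕ) := by linarith
    have : 4 < j + 1 := by exact_mod_cast this
    omega
  have hfac : (2 * π * √((m * n : ℕ) : ℝ)) ^ j / j ! ≤ 2 * exp 1 / 2 ^ (j + 1) :=
    pow_div_factorial_le_of_two_exp_mul_le (by positivity) <| by
      convert hk using 1 <;> push_cast <;> ring
  have hlog : log 2 ≤ log (2 * ((m * n : ℕ) : ℝ)) := log_le_log (by norm_num) (by linarith)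
  rw [Nat.add_sub_cancel, rpow_neg zero_le_two, rpow_natCast]
  calc ∑' c, besselMajorant (Nat.gcd m n) j (2 * π * √((m * n : ℕ) : ℝ)) c
      ≤ √(Nat.gcd m n) * (2 * exp 1 / 2 ^ (j + 1)) * (π ^ 2 / 6) :=
        (tsum_besselMajorant_le (Nat.gcd_pos_of_pos_left n hm) hj (by positivity)).trans
          (by gcongr)
    _ ≤ 2 * exp 1 * (π ^ 2 / 6) / log 2 * (2 ^ (j + 1))⁻¹ * ((m * n : ℕ) : ℝ) ^ ((1 : ℝ) / 4) *
          log 2 * 1 := by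
        have hgcd := sqrt_gcd_le_rpow_quarter hm hn
        field_simp
        gcongr
    _ ≤ _ := by
        have hlog0 : 0 ≤ log (2 * ((m * n : ℕ) : ℝ)) := (log_pos one_lt_two).le.trans hlog
        gcongr
        exact one_le_prod_one_add_div_sqrt _ (by norm_num)
end
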